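/- arXiv:1405.0446 — 4 statements merged into one kernel-verified Lean document; each statement's English description precedes it below -/
import Mathlib

section
/- In a cycle (i_1, i_2, ..., i_k, i_1) of a graph with an injective rank function r, if every vertex has at most one neighbor of lower rank among its neighbors on the cycle, and r(i_1) < r(i_2), then r(i_j) < r(i_{j+1}) for all j = 1, ..., k-1, which yields a contradiction with the edge (i_k, i_1). -/
theorem Function.Injective.exists_apply_sub_one_lt_and_apply_add_one_lt {R β : Type*} [Ring R]
    [Finite R] [Nontrivial R] [LinearOrder β] {f : R → β} (hf : Function.Injective f) :
    ∃ j, f (j - 1) < f j ∧ f (j + 1) < f j := by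
  obtain ⟨j, hj⟩ := Finite.exists_max f
  refine ⟨j, (hj _).lt_of_ne (hf.ne ?_), (hj _).lt_of_ne (hf.ne ?_)⟩
  · simp
  · simp

theorem stmt4_general {V : Type*} {k : ℕ} (hk : 3 ≤ k)
    (c : ZMod k → V)
    (r : V → ℕ) (hrinj : Function.Injective (r ∘ c))
    (hcond : ∀ j : ZMod k, ¬(r (c (j - 1)) < r (c j) ∧ r (c (j + 1)) < r (c j))) :
    (∀ j : ℕ, j + 1 < k → r (c (j : ZMod k)) < r (c ((j : ZMod k) + 1))) ∧ False := by
  have : Fact (1 < k) := ⟨by omega⟩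
  obtain ⟨j, hj⟩ := hrinj.exists_apply_sub_one_lt_and_apply_add_one_lt
  exact (hcond j hj).elim

/-- No cycle `c 0, c 1, ..., c (k-1), c 0` (with `k ≥ 3`, distinct vertices,
consecutive vertices adjacent, indices taken cyclically in `ZMod k`) can carry
an injective rank function `r` such that each vertex has at most one
cycle-neighbor of strictly smaller rank and `r (c 0) < r (c 1)`: from the
hypotheses one gets `r (c j) < r (c (j+1))` for all `j = 0, ..., k-2`, which
contradicts the edge between `c (k-1)` and `c 0`. -/
theorem stmt4 {V : Type*} (G : SimpleGraph V) {k : ℕ} (hk : 3 ≤ k)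
    (c : ZMod k → V) (hcinj : Function.Injective c)
    (hadj : ∀ j : ZMod k, G.Adj (c j) (c (j + 1)))
    (r : V → ℕ) (hrinj : Function.Injective (r ∘ c))
    (hcond : ∀ j : ZMod k, ¬(r (c (j - 1)) < r (c j) ∧ r (c (j + 1)) < r (c j)))
    (hstart : r (c 0) < r (c 1)) :
    (∀ j : ℕ, j + 1 < k → r (c (j : ZMod k)) < r (c ((j : ZMod k) + 1))) ∧ False :=
  stmt4_general hk c r hrinj hcond
end

section
/- If L is a legal list of vertices of a finite simple graph G and vertex i ∉ L has exactly one neighbor v_j in L, then inserting i into L at the position immediately after v_j yields a legal list. -/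
/-!
Inserting `x` between `A` and `B` changes only the prefix seen by `x` itself and adds `x` to the
prefixes seen by the vertices of `B`. So legality survives as soon as `x` has at most one neighbour
in `A` and none in `B`. With `A` the list up to `v_j`, the only neighbour of `i` in `L` is `v_j ∈ A`,
and `B` cannot contain `v_j` because `L` has no repetitions.
-/

/-- A list `L` of vertices is *legal* if each vertex has at most one
neighbor preceding it in the list. -/
def IsLegal {V : Type*} (G : SimpleGraph V) [DecidableRel G.Adj] (L : List V) : Prop :=
  ∀ i : Fin L.length, ((L.take i).filter (fun u => decide (G.Adj u (L.get i)))).length ≤ 1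

theorem List.Nodup.length_filter_le_one {α : Type*} {l : List α} (hl : l.Nodup) {p : α → Bool}
    {a : α} (hp : ∀ x ∈ l, p x → x = a) : (l.filter p).length ≤ 1 := by
  have : (l.filter p).Subperm [a] := (hl.filter p).subperm fun x hx => by
    rw [List.mem_filter] at hx
    simpa using hp x hx.1 hx.2
  simpa using this.length_le

section

variable {V : Type*} {G : SimpleGraph V} [DecidableRel G.Adj]

theorem isLegal_iff_forall_append_cons {L : List V} :
    IsLegal G L ↔ ∀ l₁ v l₂, L = l₁ ++ v :: l₂ → (l₁.filter (fun u => G.Adj u v)).length ≤ 1 := by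
  constructor
  · rintro h l₁ v l₂ rfl
    simpa using h ⟨l₁.length, by simp⟩
  · intro h k
    refine h _ _ (L.drop (k + 1)) ?_
    rw [List.get_eq_getElem, ← List.drop_eq_getElem_cons, List.take_append_drop]

theorem IsLegal.insert {A B : List V} {x : V} (hAB : IsLegal G (A ++ B))
    (hx : (A.filter (fun u => G.Adj u x)).length ≤ 1) (hxB : ∀ v ∈ B, ¬G.Adj x v) :
    IsLegal G (A ++ x :: B) := by
  rw [isLegal_iff_forall_append_cons] at hAB ⊢
  intro l₁ v l₂ h
  rcases List.append_eq_append_iff.1 h with ⟨a, rfl, hsplit⟩ | ⟨c, rfl, hsplit⟩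
  · rcases a with _ | ⟨y, a⟩
    · obtain ⟨rfl, rfl⟩ := List.cons_eq_cons.1 (by simpa using hsplit)
      simpa using hx
    · obtain ⟨rfl, rfl⟩ := List.cons_eq_cons.1 hsplit
      have hxv : ¬G.Adj x v := hxB v (by simp)
      simpa [List.filter_append, List.filter_cons, hxv] using hAB (A ++ a) v l₂ (by simp)
  · rcases c with _ | ⟨y, c⟩
    · obtain ⟨rfl, rfl⟩ := List.cons_eq_cons.1 (by simpa using hsplit)
      simpa using hx
    · obtain ⟨rfl, rfl⟩ := List.cons_eq_cons.1 hsplit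
      exact hAB l₁ v (c ++ B) (by simp)

end

theorem stmt9_general {V : Type*} (G : SimpleGraph V) [DecidableRel G.Adj]
    (L : List V) (hnd : L.Nodup) (hlegal : IsLegal G L)
    (i : V) (j : Fin L.length)
    (huniq : ∀ u ∈ L, G.Adj u i → u = L.get j) :
    IsLegal G (L.take (j + 1) ++ i :: L.drop (j + 1)) := by
  have hj : L.get j ∈ L.take (j + 1) := List.mem_take_iff_getElem.2 ⟨j, by simp⟩
  refine IsLegal.insert (by rwa [List.take_append_drop]) ?_ ?_
  · refine (hnd.sublist (List.take_sublist _ _)).length_filter_le_one (a := L.get j) fun u hu hui => ?_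
    exact huniq u (List.mem_of_mem_take hu) (by simpa using hui)
  · intro v hv hiv
    obtain rfl := huniq v (List.mem_of_mem_drop hv) hiv.symm
    exact List.disjoint_take_drop hnd le_rfl hj hv

/-- If a vertex `i` outside a legal list `L` has exactly one neighbor in `L`,
namely the one at position `j`, then inserting `i` immediately after that
position yields a legal list. -/
theorem stmt9 {V : Type*} [DecidableEq V] (G : SimpleGraph V) [DecidableRel G.Adj]
    (L : List V) (hnd : L.Nodup) (hlegal : IsLegal G L)
    (i : V) (hi : i ∉ L) (j : Fin L.length)
    (hadj : G.Adj (L.get j) i)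
    (huniq : ∀ u ∈ L, G.Adj u i → u = L.get j) :
    IsLegal G (L.take (j + 1) ++ i :: L.drop (j + 1)) :=
  stmt9_general G L hnd hlegal i j huniq
end

section
/- Let G be a finite simple graph, L a legal list, and i ∉ L a vertex with at least two neighbors in L, among which v_j has the lowest position. If i is inserted immediately after v_j and every neighbor of i in L whose ranking condition becomes violated is removed from the list, then the resulting list is legal. -/
namespace List

theorem filter_take_idxOf {α : Type*} [DecidableEq α] (p : α → Bool) {w : α} (hw : p w)
    (l : List α) : (l.filter p).take ((l.filter p).idxOf w) = (l.take (l.idxOf w)).filter p := by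
  induction l with
  | nil => rfl
  | cons a l ih =>
    by_cases hpa : p a
    · rcases eq_or_ne a w with rfl | hne
      · simp [hpa]
      · rw [filter_cons_of_pos hpa, idxOf_cons_ne _ hne, idxOf_cons_ne _ hne, take_succ_cons,
          take_succ_cons, filter_cons_of_pos hpa, ih]
    · have hne : a ≠ w := by rintro rfl; exact hpa hw
      rw [filter_cons_of_neg hpa, idxOf_cons_ne _ hne, take_succ_cons, filter_cons_of_neg hpa, ih]

end List

namespace SimpleGraph

variable {V : Type*} [DecidableEq V] (G : SimpleGraph V) [DecidableRel G.Adj]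

def precedingNeighbors (l : List V) (w : V) : List V :=
  (l.take (l.idxOf w)).filter (fun u => decide (G.Adj u w))

variable {G}

theorem precedingNeighbors_filter (p : V → Bool) {w : V} (hw : p w) (l : List V) :
    G.precedingNeighbors (l.filter p) w = (G.precedingNeighbors l w).filter p := by
  unfold precedingNeighbors
  rw [List.filter_take_idxOf p hw, List.filter_comm]

theorem precedingNeighbors_append_of_mem {l₁ : List V} (l₂ : List V) {w : V} (hw : w ∈ l₁) :
    G.precedingNeighbors (l₁ ++ l₂) w = G.precedingNeighbors l₁ w := by
  unfold precedingNeighbors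
  rw [List.idxOf_append_of_mem hw,
    List.take_append_of_le_length (List.idxOf_lt_length_iff.mpr hw).le]

theorem precedingNeighbors_append_cons_self {l₁ : List V} (l₂ : List V) {a : V} (ha : a ∉ l₁) :
    G.precedingNeighbors (l₁ ++ a :: l₂) a = l₁.filter (fun u => decide (G.Adj u a)) := by
  rw [precedingNeighbors, List.idxOf_append_of_notMem ha, List.idxOf_cons_self, Nat.add_zero,
    List.take_left]

theorem isLegal_iff_forall_precedingNeighbors {l : List V} (hl : l.Nodup) :
    IsLegal G l ↔ ∀ w ∈ l, (G.precedingNeighbors l w).length ≤ 1 := by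
  have hidx (k : Fin l.length) : l.idxOf (l.get k) = k := hl.idxOf_getElem k k.isLt
  refine ⟨fun h w hw => ?_, fun h k => ?_⟩
  · obtain ⟨k, rfl⟩ := List.get_of_mem hw
    rw [precedingNeighbors, hidx]
    exact h k
  · have := h _ (l.get_mem k)
    rwa [precedingNeighbors, hidx] at this

theorem isLegal_filter {l : List V} (hl : l.Nodup) (p : V → Bool)
    (h : ∀ w ∈ l, p w → (G.precedingNeighbors l w).length ≤ 1) : IsLegal G (l.filter p) := by
  refine (isLegal_iff_forall_precedingNeighbors (hl.filter p)).mpr fun w hw => ?_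
  obtain ⟨hwl, hpw⟩ := List.mem_filter.mp hw
  rw [precedingNeighbors_filter p hpw]
  exact (List.length_filter_le _ _).trans (h w hwl hpw)

theorem precedingNeighbors_insert_of_not_adj {l₁ l₂ : List V} {a w : V} (ha : a ∉ l₁ ++ l₂)
    (haw : ¬G.Adj a w) (hw : w ≠ a) :
    G.precedingNeighbors (l₁ ++ a :: l₂) w = G.precedingNeighbors (l₁ ++ l₂) w := by
  have herase : (l₁ ++ a :: l₂).filter (fun u => decide (u ≠ a)) = l₁ ++ l₂ := by
    rw [List.filter_append, List.filter_cons_of_neg (by simp), ← List.filter_append,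
      List.filter_eq_self]
    rintro u hu
    simpa using ne_of_mem_of_not_mem hu ha
  rw [← herase, precedingNeighbors_filter _ (by simpa using hw), eq_comm, List.filter_eq_self]
  intro u hu
  have hadj : G.Adj u w := by simpa [precedingNeighbors] using (List.mem_filter.mp hu).2
  simpa using fun hua : u = a => haw (hua ▸ hadj)

omit [DecidableEq V] in
theorem length_filter_adj_take_le_one {L : List V} (hnd : L.Nodup) {i : V} (j : Fin L.length)
    (hlow : ∀ k : Fin L.length, G.Adj (L.get k) i → j ≤ k) :
    ((L.take (j + 1)).filter (fun u => decide (G.Adj u i))).length ≤ 1 := by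
  have hsub : (L.take (j + 1)).filter (fun u => decide (G.Adj u i)) ⊆ [L.get j] := by
    intro u hu
    obtain ⟨hu, hadj⟩ := List.mem_filter.mp hu
    obtain ⟨n, hn, rfl⟩ := List.mem_iff_getElem.mp hu
    rw [List.length_take] at hn
    have hjn : (j : ℕ) ≤ n := hlow ⟨n, by omega⟩ (by simpa using hadj)
    simp [show n = j by omega]
  exact ((hnd.sublist (L.take_sublist _)).filter _ |>.subperm hsub).length_le

end SimpleGraph

theorem stmt10_general {V : Type*} [DecidableEq V] (G : SimpleGraph V) [DecidableRel G.Adj]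
    (L : List V) (hnd : L.Nodup) (hlegal : IsLegal G L)
    (i : V) (hi : i ∉ L) (j : Fin L.length)
    (hlow : ∀ k : Fin L.length, G.Adj (L.get k) i → j ≤ k) :
    IsLegal G ((L.take (j + 1) ++ i :: L.drop (j + 1)).filter
      (fun w => decide ¬(G.Adj i w ∧ w ≠ L.get j ∧
        2 ≤ (((L.take (j + 1) ++ i :: L.drop (j + 1)).take
                ((L.take (j + 1) ++ i :: L.drop (j + 1)).idxOf w)).filter
              (fun u => decide (G.Adj u w))).length))) := by
  set A := L.take (j + 1)
  set B := L.drop (j + 1)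
  have hL : A ++ B = L := L.take_append_drop _
  have hjA : L.get j ∈ A := by
    rw [List.mem_iff_getElem]
    exact ⟨j, by simp [A], by simp [A]⟩
  have hlegal' : ∀ w ∈ A ++ B, (G.precedingNeighbors (A ++ B) w).length ≤ 1 := by
    rw [hL]; exact (G.isLegal_iff_forall_precedingNeighbors hnd).mp hlegal
  have hi' : i ∉ A ++ B := by rwa [hL]
  have hnd' : (A ++ B).Nodup := by rwa [hL]
  refine G.isLegal_filter (List.nodup_middle.mpr (List.nodup_cons.mpr ⟨hi', hnd'⟩)) _ ?_
  intro w hw hpw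
  obtain hwA | rfl | hwB : w ∈ A ∨ w = i ∨ w ∈ B := by simpa using hw
  · have := hlegal' w (List.mem_append_left _ hwA)
    rwa [G.precedingNeighbors_append_of_mem _ hwA] at this ⊢
  · rw [G.precedingNeighbors_append_cons_self _ fun h => hi' (List.mem_append_left _ h)]
    exact G.length_filter_adj_take_le_one hnd j hlow
  · by_cases hadj : G.Adj i w
    · have hne : w ≠ L.get j := fun h => List.disjoint_of_nodup_append hnd' hjA (h ▸ hwB)
      simp only [decide_eq_true_eq, not_and, not_le] at hpw
      exact Nat.lt_succ_iff.mp (hpw hadj hne)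
    · have hwi : w ≠ i := fun h => hi' (List.mem_append_right _ (h ▸ hwB))
      rw [G.precedingNeighbors_insert_of_not_adj hi' hadj hwi]
      exact hlegal' w (List.mem_append_right _ hwB)

/-- Let `i ∉ L` have at least two neighbors in the legal list `L`, with `L.get j`
its lowest-positioned neighbor.  Inserting `i` immediately after position `j`
and then deleting every neighbor of `i` (other than `L.get j`) whose ranking
condition becomes violated yields a legal list. -/
theorem stmt10 {V : Type*} [DecidableEq V] (G : SimpleGraph V) [DecidableRel G.Adj]
    (L : List V) (hnd : L.Nodup) (hlegal : IsLegal G L)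
    (i : V) (hi : i ∉ L) (j : Fin L.length)
    (hadj : G.Adj (L.get j) i)
    (hlow : ∀ k : Fin L.length, G.Adj (L.get k) i → j ≤ k)
    (htwo : ∃ k : Fin L.length, k ≠ j ∧ G.Adj (L.get k) i) :
    IsLegal G ((L.take (j + 1) ++ i :: L.drop (j + 1)).filter
      (fun w => decide ¬(G.Adj i w ∧ w ≠ L.get j ∧
        2 ≤ (((L.take (j + 1) ++ i :: L.drop (j + 1)).take
                ((L.take (j + 1) ++ i :: L.drop (j + 1)).idxOf w)).filter
              (fun u => decide (G.Adj u w))).length))) :=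
  stmt10_general G L hnd hlegal i hi j hlow
end

section
/- For any finite simple undirected graph G, the minimum cardinality of a feedback vertex set equals |V(G)| minus the maximum cardinality of a vertex subset that admits a legal ordering. -/
/-!
A vertex set admits a legal ordering exactly when it induces a forest, so the minimum feedback
vertex sets are the complements of the maximum legally orderable sets. A forest has a vertex with at
most one neighbour (an end of a longest path); putting it last after a legal ordering of the rest
gives a legal ordering. Conversely, on a cycle inside a legally ordered set, the vertex of the
cycle that comes last in the order has two cycle neighbours before it.
-/

open Finset

theorem List.Nodup.length_le_one_iff {α : Type*} {l : List α} (h : l.Nodup) :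
    l.length ≤ 1 ↔ ∀ a ∈ l, ∀ b ∈ l, a = b := by
  classical
  rw [← List.toFinset_card_of_nodup h, Finset.card_le_one]
  simp only [List.mem_toFinset]

namespace SimpleGraph

variable {V : Type*} {G : SimpleGraph V}

theorem IsAcyclic.exists_neighborSet_subsingleton [Finite V] [Nonempty V] (hG : G.IsAcyclic) :
    ∃ u, (G.neighborSet u).Subsingleton := by
  obtain ⟨u, v, p, hp, hmax⟩ := Walk.exists_isPath_forall_isPath_length_le_length G
  have hsnd : ∀ w, G.Adj u w → w = p.snd := fun w hw ↦ by
    by_cases hws : w ∈ p.support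
    · exact hG.eq_snd_of_adj_start hp hw hws
    · have := hmax _ _ _ (hp.cons (h := hw.symm) hws)
      simp at this
  exact ⟨u, fun a ha b hb ↦ (hsnd a ha).trans (hsnd b hb).symm⟩

theorem Walk.IsCycle.exists_two_adj_mem_support {u v : V} {c : G.Walk v v} (hc : c.IsCycle)
    (hu : u ∈ c.support) :
    ∃ a b, a ≠ b ∧ G.Adj u a ∧ G.Adj u b ∧ a ∈ c.support ∧ b ∈ c.support := by
  classical
  have hc' := (Walk.isCycle_rotate hu).mpr hc
  refine ⟨_, _, hc'.snd_ne_penultimate, Walk.adj_snd hc'.not_nil,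
    (Walk.adj_penultimate hc'.not_nil).symm, ?_, ?_⟩ <;>
  exact (Walk.mem_support_rotate_iff c u hu).mp (Walk.getVert_mem_support _ _)

end SimpleGraph

section Legal

variable {V : Type*} {G : SimpleGraph V} [DecidableRel G.Adj]

theorem isLegal_nil : IsLegal G [] := fun i ↦ i.elim0

theorem isLegal_iff {L : List V} :
    IsLegal G L ↔ ∀ i (hi : i < L.length), ((L.take i).filter (fun u ↦ G.Adj u L[i])).length ≤ 1 :=
  Fin.forall_iff

theorem isLegal_append_singleton_iff {L : List V} {v : V} :
    IsLegal G (L ++ [v]) ↔ IsLegal G L ∧ (L.filter (fun u ↦ G.Adj u v)).length ≤ 1 := by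
  simp only [isLegal_iff, List.length_append, List.length_singleton, Nat.forall_lt_succ_right']
  refine and_congr (forall₂_congr fun i hi ↦ ?_) ?_
  · rw [List.getElem_append_left hi, List.take_append_of_le_length hi.le]
  · simp

theorem IsLegal.isAcyclic_induce {L : List V} (hL : IsLegal G L) (hnd : L.Nodup) :
    (G.induce {v | v ∈ L}).IsAcyclic := by
  classical
  intro v c hc
  obtain ⟨u, hu, hmax⟩ := c.support.toFinset.exists_max_image (fun x ↦ L.idxOf x.1) ⟨v, by simp⟩
  rw [List.mem_toFinset] at hu
  obtain ⟨a, b, hab, hua, hub, ha, hb⟩ := hc.exists_two_adj_mem_support hu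
  have hu_idx : L.idxOf u.1 < L.length := List.idxOf_lt_length_iff.mpr u.2
  have hearlier : ∀ x, (G.induce {v | v ∈ L}).Adj u x → x ∈ c.support →
      x.1 ∈ (L.take (L.idxOf u.1)).filter (fun w ↦ G.Adj w (L.get ⟨_, hu_idx⟩)) := by
    intro x hux hx
    have hxu : L.idxOf x.1 ≠ L.idxOf u.1 :=
      fun h ↦ hux.ne (Subtype.ext ((List.idxOf_inj x.2).mp h)).symm
    rw [List.mem_filter, List.mem_take_iff_idxOf_lt x.2, List.idxOf_get]
    exact ⟨lt_of_le_of_ne (hmax x (List.mem_toFinset.mpr hx)) hxu, decide_eq_true hux.symm⟩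
  exact hab <| Subtype.ext <|
    (((List.filter_sublist).trans (List.take_sublist _ _)).nodup hnd).length_le_one_iff.mp
      (hL ⟨_, hu_idx⟩) _ (hearlier a hua ha) _ (hearlier b hub hb)

theorem exists_isLegal_toFinset_eq_of_isAcyclic_induce [DecidableEq V] (W : Finset V)
    (hW : (G.induce (W : Set V)).IsAcyclic) :
    ∃ L : List V, L.Nodup ∧ IsLegal G L ∧ L.toFinset = W := by
  induction W using Finset.strongInduction with | H W ih =>
  rcases W.eq_empty_or_nonempty with rfl | ⟨w, hw⟩
  · exact ⟨[], List.nodup_nil, isLegal_nil, rfl⟩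
  have : Nonempty (W : Set V) := ⟨⟨w, hw⟩⟩
  obtain ⟨u, hu⟩ := hW.exists_neighborSet_subsingleton
  obtain ⟨L, hnd, hL, hLW⟩ := ih _ (Finset.erase_ssubset u.2)
    (hW.embedding (G.induceHomOfLE (by simp)))
  have hmem : ∀ {x}, x ∈ L ↔ x ∈ W ∧ x ≠ u := by simp [← List.mem_toFinset, hLW, and_comm]
  have huL : u.1 ∉ L := fun h ↦ (hmem.mp h).2 rfl
  refine ⟨L ++ [u.1], List.concat_eq_append ▸ hnd.concat huL, isLegal_append_singleton_iff.mpr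
    ⟨hL, (hnd.filter _).length_le_one_iff.mpr fun a ha b hb ↦ ?_⟩, ?_⟩
  · simp only [List.mem_filter, decide_eq_true_eq] at ha hb
    exact congrArg Subtype.val <|
      hu (show (G.induce (W : Set V)).Adj u ⟨a, (hmem.mp ha.1).1⟩ from ha.2.symm)
        (show (G.induce (W : Set V)).Adj u ⟨b, (hmem.mp hb.1).1⟩ from hb.2.symm)
  · rw [List.toFinset_append, hLW]
    simp [Finset.insert_erase u.2]

end Legal

/-- The minimum cardinality of a feedback vertex set equals the number of
vertices minus the maximum cardinality of a subset admitting a legal ordering. -/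
theorem stmt11 {V : Type*} [Fintype V] [DecidableEq V] (G : SimpleGraph V) [DecidableRel G.Adj] :
    sInf {n : ℕ | ∃ S : Finset V, (G.induce ((↑S : Set V))ᶜ).IsAcyclic ∧ S.card = n} =
      Fintype.card V -
        sSup {n : ℕ | ∃ L : List V, L.Nodup ∧ IsLegal G L ∧ L.length = n} := by
  set legalLengths := {n : ℕ | ∃ L : List V, L.Nodup ∧ IsLegal G L ∧ L.length = n}
  have hbdd : BddAbove legalLengths := ⟨Fintype.card V, by
    rintro _ ⟨L, hnd, -, rfl⟩
    exact hnd.length_le_card⟩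
  obtain ⟨L, hnd, hL, hlen⟩ : sSup legalLengths ∈ legalLengths :=
    Nat.sSup_mem ⟨0, [], List.nodup_nil, isLegal_nil, rfl⟩ hbdd
  have hfvs : ∃ S : Finset V, (G.induce ((↑S : Set V))ᶜ).IsAcyclic ∧
      S.card = Fintype.card V - sSup legalLengths := by
    refine ⟨L.toFinsetᶜ, ?_, ?_⟩
    · rw [coe_compl, compl_compl, List.coe_toFinset]
      exact hL.isAcyclic_induce hnd
    · rw [card_compl, List.toFinset_card_of_nodup hnd, hlen]
  refine le_antisymm (Nat.sInf_le hfvs) (le_csInf ⟨_, hfvs⟩ ?_)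
  rintro _ ⟨S, hS, rfl⟩
  obtain ⟨L', hnd', hL', hL'S⟩ :=
    exists_isLegal_toFinset_eq_of_isAcyclic_induce Sᶜ (by rwa [coe_compl])
  have hle : L'.length ≤ sSup legalLengths := le_csSup hbdd ⟨L', hnd', hL', rfl⟩
  rw [← List.toFinset_card_of_nodup hnd', hL'S, card_compl] at hle
  have := card_le_univ S
  omega
end
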